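/- Define the Hölder estimate hₖ by h₀ = 0 and hₖ = max{hₖ₋₁, (3/‖vₖ‖²)(f(xₖ) − f(xₖ₋₁) − (1/2)⟨∇f(xₖ₋₁)+∇f(xₖ), vₖ⟩), √(8/(k Sₖ)) (‖∇f(x̄ₖ)‖ − (ℓ/k)‖vₖ‖)} along the heavy-ball iterates. If f is twice differentiable with ν-Hölder continuous Hessian with constant H_ν for some ν ∈ [0,1], then hₖ ≤ H_ν (k Sₖ)^{ν/2} for all k ≥ 1. -/

import Mathlib

open Finset

/-!
Both quantities entering `hₖ` are errors of first-order approximations of `∇f`, and a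
`ν`-Hölder Hessian bounds such an error at distance `r` by `H r^(1+ν)`.

The first is the error of the trapezoidal rule along the step `w = vₖ`: the interpolation error
`∇f(a + t w) - ((1 - t) ∇f(a) + t ∇f(a + w))` is at most `2t(1 - t) H ‖w‖^(1+ν)`, which integrates
to `H ‖w‖^(2+ν) / 3`. The second compares `∇f(x̄ₖ)` with the mean `-(ℓ/k) vₖ` of the gradients
along the trajectory; by Jensen it is at most `H σ^(1+ν)`, where `σ²` is the mean squared distance
of the iterates to `x̄ₖ`, and the Lagrange identity together with Cauchy–Schwarz on the increments
gives `σ² ≤ k Sₖ / 8`. Both bounds are at most `H (k Sₖ)^(ν/2)`, which is nondecreasing in `k`.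
-/

theorem rpow_add_div_rpow_le {r : ℝ} (hr : 0 ≤ r) (a b : ℝ) : r ^ (a + b) / r ^ a ≤ r ^ b := by
  rcases hr.eq_or_lt with rfl | hr
  · rcases eq_or_ne a 0 with rfl | ha
    · simp
    · rw [Real.zero_rpow ha, div_zero]
      exact Real.rpow_nonneg le_rfl b
  · rw [Real.rpow_add hr, mul_div_cancel_left₀ _ (Real.rpow_pos_of_pos hr a).ne']

theorem rpow_le_rpow_half_of_sq_le {r P ν : ℝ} (hr : 0 ≤ r) (hrP : r ^ 2 ≤ P) (hν : 0 ≤ ν) :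
    r ^ ν ≤ P ^ (ν / 2) :=
  calc r ^ ν = (r ^ 2) ^ (ν / 2) := by
        rw [← Real.rpow_natCast, ← Real.rpow_mul hr]; ring_nf
    _ ≤ P ^ (ν / 2) := by gcongr

theorem inv_card_mul_sum_rpow_le {ι : Type*} {s : Finset ι} (hs : s.Nonempty) {a : ι → ℝ}
    (ha : ∀ i ∈ s, 0 ≤ a i) {p : ℝ} (hp₀ : 0 ≤ p) (hp₁ : p ≤ 1) :
    (#s : ℝ)⁻¹ * ∑ i ∈ s, a i ^ p ≤ ((#s : ℝ)⁻¹ * ∑ i ∈ s, a i) ^ p := by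
  have hcard : (0 : ℝ) < #s := by exact_mod_cast hs.card_pos
  simpa [mul_sum] using (Real.concaveOn_rpow hp₀ hp₁).le_map_sum (t := s)
    (w := fun _ => (#s : ℝ)⁻¹) (p := a) (fun _ _ => by positivity) (by simp [hcard.ne']) ha

-- `2 t (1 - t)` integrates to `1 / 3` over `[0, 1]`
theorem sub_le_div_three_of_hasDerivAt_le {φ φ' : ℝ → ℝ} {C : ℝ}
    (hφ : ∀ t, HasDerivAt φ (φ' t) t)
    (hle : ∀ t ∈ Set.Ioo (0 : ℝ) 1, φ' t ≤ C * (2 * t * (1 - t))) :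
    φ 1 - φ 0 ≤ C / 3 := by
  let χ t := φ t - C * (t ^ 2 - 2 / 3 * t ^ 3)
  have hχ : ∀ t, HasDerivAt χ (φ' t - C * (2 * t * (1 - t))) t := fun t =>
    ((hφ t).sub (((hasDerivAt_pow 2 t).sub ((hasDerivAt_pow 3 t).const_mul (2 / 3))).const_mul
      C)).congr_deriv (by push_cast; ring)
  have hanti : AntitoneOn χ (Set.Icc 0 1) :=
    antitoneOn_of_hasDerivWithinAt_nonpos (convex_Icc 0 1)
      (fun t _ => (hχ t).continuousAt.continuousWithinAt) (fun t _ => (hχ t).hasDerivWithinAt)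
      (fun t ht => sub_nonpos.2 (hle t (by simpa using ht)))
  have := hanti (Set.left_mem_Icc.2 zero_le_one) (Set.right_mem_Icc.2 zero_le_one) zero_le_one
  simp only [χ] at this
  linarith

theorem sum_Ico_sum_range_sub (n k : ℕ) (hnk : n ≤ k) :
    ∑ j ∈ Ico n k, ∑ i ∈ range n, ((j : ℝ) - i) = n * k * (k - n) / 2 := by
  have hgauss : ∀ n : ℕ, ∑ i ∈ range n, (i : ℝ) = n * (n - 1) / 2 := fun n => by
    induction n with
    | zero => simp
    | succ n ih => rw [sum_range_succ, ih]; push_cast; ring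
  induction k, hnk using Nat.le_induction with
  | base => simp
  | succ k hnk ih =>
    rw [sum_Ico_succ_top hnk, ih, sum_sub_distrib, sum_const, card_range, hgauss]
    push_cast; ring

theorem sum_Ico_sum_range_sub_le (n k : ℕ) :
    ∑ j ∈ Ico n k, ∑ i ∈ range n, ((j : ℝ) - i) ≤ k ^ 3 / 8 := by
  rcases le_or_gt n k with hnk | hkn
  · rw [sum_Ico_sum_range_sub n k hnk]
    have : (n : ℝ) ≤ k := by exact_mod_cast hnk
    nlinarith [sq_nonneg ((k : ℝ) - 2 * n), (Nat.cast_nonneg n : (0 : ℝ) ≤ n)]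
  · rw [Ico_eq_empty_of_le hkn.le, sum_empty]
    positivity

theorem le_of_max_recursion {α : Type*} [LinearOrder α] {h a b : ℕ → α}
    (hrec : ∀ k, 1 ≤ k → h k = max (h (k - 1)) (a k)) (h₀ : h 0 ≤ b 1)
    (hab : ∀ k, 1 ≤ k → a k ≤ b k) (hb : ∀ k, 1 ≤ k → b k ≤ b (k + 1)) {k : ℕ} (hk : 1 ≤ k) :
    h k ≤ b k := by
  induction k, hk using Nat.le_induction with
  | base => rw [hrec 1 le_rfl]; exact max_le h₀ (hab 1 le_rfl)
  | succ k hk ih =>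
    rw [hrec (k + 1) (by omega), Nat.add_sub_cancel]
    exact max_le (ih.trans (hb k hk)) (hab (k + 1) (by omega))

theorem sub_eq_sum_Ioc {G : Type*} [AddCommGroup G] {x v : ℕ → G}
    (hx : ∀ n, x (n + 1) = x n + v (n + 1)) {i j : ℕ} (hij : i ≤ j) :
    x j - x i = ∑ n ∈ Ioc i j, v n := by
  induction j, hij using Nat.le_induction with
  | base => simp
  | succ j hij ih => rw [sum_Ioc_succ_top hij, ← ih, hx]; abel

section Increments

variable {E : Type*} [SeminormedAddCommGroup E]

theorem norm_sum_sq_le_card_mul_sum_norm_sq {ι : Type*} (s : Finset ι) (v : ι → E) :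
    ‖∑ i ∈ s, v i‖ ^ 2 ≤ #s * ∑ i ∈ s, ‖v i‖ ^ 2 :=
  (pow_le_pow_left₀ (norm_nonneg _) (norm_sum_le _ _) 2).trans sq_sum_le_card_mul_sum_sq

theorem sq_norm_le_mul_sum_sq_norm (v : ℕ → E) {k : ℕ} (hk : 1 ≤ k) :
    ‖v k‖ ^ 2 ≤ k * ∑ n ∈ Icc 1 k, ‖v n‖ ^ 2 :=
  calc ‖v k‖ ^ 2 ≤ ∑ n ∈ Icc 1 k, ‖v n‖ ^ 2 :=
        single_le_sum (f := fun n => ‖v n‖ ^ 2) (fun _ _ => by positivity) (by simp [hk])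
    _ ≤ k * ∑ n ∈ Icc 1 k, ‖v n‖ ^ 2 :=
        le_mul_of_one_le_left (by positivity) (by exact_mod_cast hk)

theorem sum_sum_norm_sub_sq_le {x v : ℕ → E} (hx : ∀ n, x (n + 1) = x n + v (n + 1)) (k : ℕ) :
    ∑ j ∈ range k, ∑ i ∈ range j, ‖x i - x j‖ ^ 2 ≤ k ^ 3 / 8 * ∑ n ∈ Icc 1 k, ‖v n‖ ^ 2 :=
  calc _ ≤ ∑ j ∈ range k, ∑ i ∈ range j, ∑ n ∈ Ioc i j, ((j : ℝ) - i) * ‖v n‖ ^ 2 := by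
        gcongr with j hj i hi
        have hij : i ≤ j := (mem_range.1 hi).le
        rw [norm_sub_rev, sub_eq_sum_Ioc hx hij, ← mul_sum]
        exact (norm_sum_sq_le_card_mul_sum_norm_sq _ _).trans_eq
          (by rw [Nat.card_Ioc, Nat.cast_sub hij])
    -- each step `n` lies in the increments of the pairs `i < n ≤ j`
    _ = ∑ n ∈ Ioo 0 k, (∑ j ∈ Ico n k, ∑ i ∈ range n, ((j : ℝ) - i)) * ‖v n‖ ^ 2 := by
        rw [sum_congr rfl fun j _ => sum_comm' (t' := Ioc 0 j) (s' := fun n => range n)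
          (fun i n => by simp only [mem_range, mem_Ioc]; omega)]
        rw [sum_comm' (t' := Ioo 0 k) (s' := fun n => Ico n k)
          (fun j n => by simp only [mem_range, mem_Ioc, mem_Ioo, mem_Ico]; omega)]
        simp only [sum_mul]
    _ ≤ ∑ n ∈ Icc 1 k, k ^ 3 / 8 * ‖v n‖ ^ 2 := by
        refine (sum_le_sum fun n _ => ?_).trans (sum_le_sum_of_subset_of_nonneg ?_ ?_)
        · gcongr; exact sum_Ico_sum_range_sub_le n k
        · intro n; simp only [mem_Ioo, mem_Icc]; omega
        · intros; positivity
    _ = _ := by rw [mul_sum]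

end Increments

section InnerProduct

variable {E : Type*} [NormedAddCommGroup E] [InnerProductSpace ℝ E]

theorem card_mul_sum_norm_sq_sub_norm_sum_sq (x : ℕ → E) (k : ℕ) :
    k * ∑ i ∈ range k, ‖x i‖ ^ 2 - ‖∑ i ∈ range k, x i‖ ^ 2
      = ∑ j ∈ range k, ∑ i ∈ range j, ‖x i - x j‖ ^ 2 := by
  induction k with
  | zero => simp
  | succ k ih =>
    rw [sum_range_succ, sum_range_succ, sum_range_succ, ← ih, norm_add_sq_real]
    simp only [norm_sub_sq_real, sum_add_distrib, sum_sub_distrib, ← sum_inner, ← mul_sum,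
      sum_const, card_range, nsmul_eq_mul]
    push_cast; ring

theorem sum_norm_sub_average_sq_le {x v : ℕ → E} (hx : ∀ n, x (n + 1) = x n + v (n + 1))
    (k : ℕ) :
    ∑ i ∈ range k, ‖x i - (k : ℝ)⁻¹ • ∑ j ∈ range k, x j‖ ^ 2
      ≤ k ^ 2 / 8 * ∑ n ∈ Icc 1 k, ‖v n‖ ^ 2 := by
  rcases Nat.eq_zero_or_pos k with rfl | hk
  · simp
  have hk' : (0 : ℝ) < k := by exact_mod_cast hk
  set m := (k : ℝ)⁻¹ • ∑ j ∈ range k, x j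
  have hcentered : ∑ i ∈ range k, (x i - m) = 0 := by
    rw [sum_sub_distrib, sum_const, card_range, ← Nat.cast_smul_eq_nsmul ℝ,
      smul_inv_smul₀ hk'.ne', sub_self]
  have hlagrange := card_mul_sum_norm_sq_sub_norm_sum_sq (fun i => x i - m) k
  simp only [hcentered, norm_zero, sub_sub_sub_cancel_right] at hlagrange
  have := hlagrange.trans_le (sum_sum_norm_sub_sq_le hx k)
  rw [← mul_le_mul_iff_right₀ hk']
  nlinarith

end InnerProduct

section HolderDerivative

variable {E F : Type*} [NormedAddCommGroup E] [NormedSpace ℝ E]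
  [NormedAddCommGroup F] [NormedSpace ℝ F] {g : E → F} {H ν : ℝ}

theorem norm_sub_sub_fderiv_le_of_holder (hg : Differentiable ℝ g) (hH : 0 ≤ H) (hν : 0 ≤ ν)
    (hHolder : ∀ x y, ‖fderiv ℝ g x - fderiv ℝ g y‖ ≤ H * ‖x - y‖ ^ ν) (a b : E) :
    ‖g a - g b - fderiv ℝ g b (a - b)‖ ≤ H * ‖a - b‖ ^ (1 + ν) := by
  have hderiv : ∀ z ∈ Metric.closedBall b ‖a - b‖,
      ‖fderiv ℝ g z - fderiv ℝ g b‖ ≤ H * ‖a - b‖ ^ ν := fun z hz =>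
    (hHolder z b).trans (by gcongr; exact mem_closedBall_iff_norm.mp hz)
  calc _ ≤ H * ‖a - b‖ ^ ν * ‖a - b‖ :=
        (convex_closedBall b _).norm_image_sub_le_of_norm_fderiv_le' (fun z _ => hg z) hderiv
          (Metric.mem_closedBall_self (norm_nonneg _)) (mem_closedBall_iff_norm.mpr le_rfl)
    _ = H * ‖a - b‖ ^ (1 + ν) := by
        rw [Real.rpow_add' (norm_nonneg _) (by positivity), Real.rpow_one]; ring

theorem norm_interpolation_sub_le_of_holder (hg : Differentiable ℝ g) (hH : 0 ≤ H) (hν : 0 ≤ ν)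
    (hHolder : ∀ x y, ‖fderiv ℝ g x - fderiv ℝ g y‖ ≤ H * ‖x - y‖ ^ ν) (a w : E) {t : ℝ}
    (ht₀ : 0 ≤ t) (ht₁ : t ≤ 1) :
    ‖g (a + t • w) - ((1 - t) • g a + t • g (a + w))‖
      ≤ 2 * t * (1 - t) * (H * ‖w‖ ^ (1 + ν)) := by
  set c := a + t • w
  set B := fderiv ℝ g c
  have ht₁' : 0 ≤ 1 - t := by linarith
  have htaylor : ∀ s y, 0 ≤ s → s ≤ 1 → ‖y - c‖ = s * ‖w‖ →
      ‖g y - g c - B (y - c)‖ ≤ s * (H * ‖w‖ ^ (1 + ν)) := by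
    intro s y hs₀ hs₁ hy
    calc _ ≤ H * (s * ‖w‖) ^ (1 + ν) := hy ▸ norm_sub_sub_fderiv_le_of_holder hg hH hν hHolder y c
      _ = s ^ (1 + ν) * (H * ‖w‖ ^ (1 + ν)) := by
        rw [Real.mul_rpow hs₀ (norm_nonneg _)]; ring
      _ ≤ s * (H * ‖w‖ ^ (1 + ν)) := by
        gcongr
        simpa using Real.rpow_le_rpow_of_exponent_ge' hs₀ hs₁ zero_le_one (by linarith : 1 ≤ 1 + ν)
  have ha : ‖a - c‖ = t * ‖w‖ := by
    simp [c, norm_smul, abs_of_nonneg ht₀]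
  have hb : ‖a + w - c‖ = (1 - t) * ‖w‖ := by
    rw [show a + w - c = (1 - t) • w by simp only [c]; module, norm_smul, Real.norm_eq_abs,
      abs_of_nonneg ht₁']
  -- the first-order terms cancel: `(1 - t) • (a - c) + t • (a + w - c) = 0`
  have hsplit : g c - ((1 - t) • g a + t • g (a + w)) =
      -((1 - t) • (g a - g c - B (a - c)) + t • (g (a + w) - g c - B (a + w - c))) := by
    have hB : (1 - t) • B (a - c) + t • B (a + w - c) = 0 := by
      rw [← map_smul, ← map_smul, ← map_add, ← map_zero B]; congr 1; simp only [c]; module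
    linear_combination (norm := module) -hB
  calc _ = ‖(1 - t) • (g a - g c - B (a - c)) + t • (g (a + w) - g c - B (a + w - c))‖ := by
        rw [hsplit, norm_neg]
    _ ≤ (1 - t) * (t * (H * ‖w‖ ^ (1 + ν))) + t * ((1 - t) * (H * ‖w‖ ^ (1 + ν))) := by
        refine (norm_add_le _ _).trans (add_le_add ?_ ?_) <;>
          rw [norm_smul, Real.norm_of_nonneg (by assumption)] <;> gcongr
        · exact htaylor t a ht₀ ht₁ ha
        · exact htaylor (1 - t) _ ht₁' (by linarith) hb
    _ = 2 * t * (1 - t) * (H * ‖w‖ ^ (1 + ν)) := by ring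

theorem norm_sub_average_le_of_holder (hg : Differentiable ℝ g) (hH : 0 ≤ H) (hν₀ : 0 ≤ ν)
    (hν₁ : ν ≤ 1) (hHolder : ∀ x y, ‖fderiv ℝ g x - fderiv ℝ g y‖ ≤ H * ‖x - y‖ ^ ν)
    {ι : Type*} {s : Finset ι} (hs : s.Nonempty) (x : ι → E) {m : E}
    (hm : m = (#s : ℝ)⁻¹ • ∑ i ∈ s, x i) :
    ‖g m - (#s : ℝ)⁻¹ • ∑ i ∈ s, g (x i)‖
      ≤ H * ((#s : ℝ)⁻¹ * ∑ i ∈ s, ‖x i - m‖ ^ 2) ^ ((1 + ν) / 2) := by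
  have hcard : (#s : ℝ) ≠ 0 := by exact_mod_cast hs.card_pos.ne'
  set B := fderiv ℝ g m
  have hcentered : ∑ i ∈ s, (x i - m) = 0 := by
    rw [sum_sub_distrib, sum_const, ← Nat.cast_smul_eq_nsmul ℝ, hm, smul_inv_smul₀ hcard, sub_self]
  -- the linear terms `B (x i - m)` average out
  have hsum : g m - (#s : ℝ)⁻¹ • ∑ i ∈ s, g (x i)
      = -((#s : ℝ)⁻¹ • ∑ i ∈ s, (g (x i) - g m - B (x i - m))) := by
    rw [sum_sub_distrib, sum_sub_distrib, ← map_sum, hcentered, map_zero, sub_zero, sum_const,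
      ← Nat.cast_smul_eq_nsmul ℝ, smul_sub, inv_smul_smul₀ hcard, neg_sub]
  have hterm : ∀ i, ‖g (x i) - g m - B (x i - m)‖ ≤ H * (‖x i - m‖ ^ 2) ^ ((1 + ν) / 2) := by
    intro i
    rw [← Real.rpow_natCast, ← Real.rpow_mul (norm_nonneg _)]
    convert norm_sub_sub_fderiv_le_of_holder hg hH hν₀ hHolder (x i) m using 3
    push_cast; ring
  calc _ = (#s : ℝ)⁻¹ * ‖∑ i ∈ s, (g (x i) - g m - B (x i - m))‖ := by
        rw [hsum, norm_neg, norm_smul, norm_inv, RCLike.norm_natCast]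
    _ ≤ (#s : ℝ)⁻¹ * ∑ i ∈ s, H * (‖x i - m‖ ^ 2) ^ ((1 + ν) / 2) := by
        gcongr
        exact (norm_sum_le _ _).trans (sum_le_sum fun i _ => hterm i)
    _ = H * ((#s : ℝ)⁻¹ * ∑ i ∈ s, (‖x i - m‖ ^ 2) ^ ((1 + ν) / 2)) := by
        rw [← mul_sum]; ring
    _ ≤ H * ((#s : ℝ)⁻¹ * ∑ i ∈ s, ‖x i - m‖ ^ 2) ^ ((1 + ν) / 2) := by
        gcongr
        exact inv_card_mul_sum_rpow_le hs (fun i _ => by positivity) (by linarith) (by linarith)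

end HolderDerivative

section Gradient

variable {E : Type*} [NormedAddCommGroup E] [InnerProductSpace ℝ E] [CompleteSpace E]
  {f : E → ℝ} {H ν : ℝ}

theorem trapezoid_error_le_of_holder (hf : Differentiable ℝ f) (hf' : Differentiable ℝ (gradient f))
    (hH : 0 ≤ H) (hν : 0 ≤ ν)
    (hHolder : ∀ x y, ‖fderiv ℝ (gradient f) x - fderiv ℝ (gradient f) y‖ ≤ H * ‖x - y‖ ^ ν)
    (a w : E) :
    f (a + w) - f a - (1 / 2) * inner ℝ (gradient f a + gradient f (a + w)) w
      ≤ 1 / 3 * (H * ‖w‖ ^ (2 + ν)) := by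
  set g := gradient f
  let φ t := f (a + t • w) - t * inner ℝ (g a) w - t ^ 2 / 2 * inner ℝ (g (a + w) - g a) w
  have hφ : ∀ t, HasDerivAt φ (inner ℝ (g (a + t • w) - ((1 - t) • g a + t • g (a + w))) w) t := by
    intro t
    have hline : HasDerivAt (fun s : ℝ => a + s • w) w t := by
      simpa using ((hasDerivAt_id t).smul_const w).const_add a
    have hcomp := (hf (a + t • w)).hasGradientAt.hasFDerivAt.comp_hasDerivAt t hline
    refine (hcomp.sub ((hasDerivAt_id' t).mul_const (inner ℝ (g a) w))).sub
      (((hasDerivAt_pow 2 t).div_const 2).mul_const (inner ℝ (g (a + w) - g a) w))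
      |>.congr_deriv ?_
    simp only [g, InnerProductSpace.toDual_apply_apply, inner_sub_left, inner_add_left,
      real_inner_smul_left]
    push_cast
    ring
  have hle : ∀ t ∈ Set.Ioo (0 : ℝ) 1,
      inner ℝ (g (a + t • w) - ((1 - t) • g a + t • g (a + w))) w
        ≤ H * ‖w‖ ^ (2 + ν) * (2 * t * (1 - t)) := by
    rintro t ⟨ht₀, ht₁⟩
    calc _ ≤ ‖g (a + t • w) - ((1 - t) • g a + t • g (a + w))‖ * ‖w‖ := real_inner_le_norm _ _
      _ ≤ 2 * t * (1 - t) * (H * ‖w‖ ^ (1 + ν)) * ‖w‖ := by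
        gcongr
        exact norm_interpolation_sub_le_of_holder hf' hH hν hHolder a w ht₀.le ht₁.le
      _ = H * ‖w‖ ^ (2 + ν) * (2 * t * (1 - t)) := by
        rw [show (2 : ℝ) + ν = 1 + ν + 1 by ring,
          Real.rpow_add_one' (norm_nonneg _) (by positivity)]
        ring
  have := sub_le_div_three_of_hasDerivAt_le hφ hle
  simp only [φ, one_smul, zero_smul, add_zero, one_pow, one_mul, zero_mul, sub_zero, ne_eq,
    OfNat.ofNat_ne_zero, not_false_eq_true, zero_pow, zero_div, inner_add_left, inner_sub_left]
    at this ⊢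
  linarith

theorem three_div_sq_mul_trapezoid_error_le (hf : Differentiable ℝ f)
    (hf' : Differentiable ℝ (gradient f)) (hH : 0 ≤ H) (hν : 0 ≤ ν)
    (hHolder : ∀ x y, ‖fderiv ℝ (gradient f) x - fderiv ℝ (gradient f) y‖ ≤ H * ‖x - y‖ ^ ν)
    (a w : E) :
    3 / ‖w‖ ^ 2 * (f (a + w) - f a - (1 / 2) * inner ℝ (gradient f a + gradient f (a + w)) w)
      ≤ H * ‖w‖ ^ ν :=
  calc _ ≤ 3 / ‖w‖ ^ 2 * (1 / 3 * (H * ‖w‖ ^ (2 + ν))) := by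
        gcongr; exact trapezoid_error_le_of_holder hf hf' hH hν hHolder a w
    _ = H * (‖w‖ ^ (2 + ν) / ‖w‖ ^ (2 : ℝ)) := by rw [Real.rpow_two]; ring
    _ ≤ H * ‖w‖ ^ ν := by gcongr; exact rpow_add_div_rpow_le (norm_nonneg _) _ _

theorem heavyBall_gradient_term_le (hf' : Differentiable ℝ (gradient f)) (hH : 0 ≤ H)
    (hν₀ : 0 ≤ ν) (hν₁ : ν ≤ 1)
    (hHolder : ∀ x y, ‖fderiv ℝ (gradient f) x - fderiv ℝ (gradient f) y‖ ≤ H * ‖x - y‖ ^ ν)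
    {ℓ : ℝ} (hℓ : 0 < ℓ) {x v : ℕ → E} (hv₀ : v 0 = 0)
    (hv : ∀ n, v (n + 1) = v n - (1 / ℓ) • gradient f (x n))
    (hx : ∀ n, x (n + 1) = x n + v (n + 1)) {k : ℕ} (hk : 1 ≤ k) :
    √(8 / (k * ∑ n ∈ Icc 1 k, ‖v n‖ ^ 2))
        * (‖gradient f ((k : ℝ)⁻¹ • ∑ i ∈ range k, x i)‖ - ℓ / k * ‖v k‖)
      ≤ H * (k * ∑ n ∈ Icc 1 k, ‖v n‖ ^ 2) ^ (ν / 2) := by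
  set P := (k : ℝ) * ∑ n ∈ Icc 1 k, ‖v n‖ ^ 2
  have hP : 0 ≤ P := by positivity
  have hk' : (0 : ℝ) < k := by exact_mod_cast hk
  have hvel : v k = -(1 / ℓ) • ∑ i ∈ range k, gradient f (x i) := by
    rw [← sub_zero (v k), ← hv₀, ← sum_range_sub, smul_sum]
    refine sum_congr rfl fun i _ => ?_
    rw [hv, neg_smul]
    abel
  have hmean : ℓ / k * ‖v k‖ = ‖(k : ℝ)⁻¹ • ∑ i ∈ range k, gradient f (x i)‖ := by
    rw [hvel, norm_smul, norm_smul, norm_neg, Real.norm_of_nonneg (by positivity),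
      Real.norm_of_nonneg (by positivity)]
    field_simp
  set m := (k : ℝ)⁻¹ • ∑ i ∈ range k, x i
  have hspread : (k : ℝ)⁻¹ * ∑ i ∈ range k, ‖x i - m‖ ^ 2 ≤ P / 8 := by
    rw [inv_mul_le_iff₀ hk']
    exact (sum_norm_sub_average_sq_le hx k).trans_eq (by ring)
  have hjensen := norm_sub_average_le_of_holder hf' hH hν₀ hν₁ hHolder (s := range k)
    (nonempty_range_iff.2 (by omega)) x (m := m) (by rw [card_range])
  rw [card_range] at hjensen
  have hgrad : ‖gradient f m‖ - ℓ / k * ‖v k‖ ≤ H * (P / 8) ^ ((1 + ν) / 2) := by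
    rw [hmean]
    exact (norm_sub_norm_le _ _).trans (hjensen.trans (by gcongr))
  calc _ ≤ √(8 / P) * (H * (P / 8) ^ ((1 + ν) / 2)) := by gcongr
    _ = H * ((P / 8) ^ (1 / 2 + ν / 2) / (P / 8) ^ (1 / 2 : ℝ)) := by
        rw [← inv_div, Real.sqrt_inv, Real.sqrt_eq_rpow, add_div]; ring
    _ ≤ H * (P / 8) ^ (ν / 2) := by gcongr; exact rpow_add_div_rpow_le (by positivity) _ _
    _ ≤ H * P ^ (ν / 2) := by gcongr; linarith

end Gradient

theorem Hest_upperbound_general (d : ℕ) (f : EuclideanSpace ℝ (Fin d) → ℝ)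
    (hf : ∀ x, DifferentiableAt ℝ f x)
    (hf' : ∀ x, DifferentiableAt ℝ (gradient f) x)
    (ν : ℝ) (hν0 : 0 ≤ ν) (hν1 : ν ≤ 1)
    (H : ℝ) (hH : 0 ≤ H)
    (hHolder : ∀ x y, ‖fderiv ℝ (gradient f) x - fderiv ℝ (gradient f) y‖ ≤ H * ‖x - y‖ ^ ν)
    (ℓ : ℝ) (hℓ : 0 < ℓ)
    (x v : ℕ → EuclideanSpace ℝ (Fin d))
    (hv0 : v 0 = 0)
    (hv : ∀ k, 1 ≤ k → v k = v (k - 1) - (1 / ℓ) • gradient f (x (k - 1)))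
    (hx : ∀ k, 1 ≤ k → x k = x (k - 1) + v k)
    (S : ℕ → ℝ) (hS : ∀ k, S k = ∑ i ∈ Icc 1 k, ‖v i‖ ^ 2)
    (xbar : ℕ → EuclideanSpace ℝ (Fin d))
    (hxbar : ∀ k, 1 ≤ k → xbar k = (1 / (k : ℝ)) • ∑ i ∈ range k, x i)
    (h : ℕ → ℝ) (hh0 : h 0 = 0)
    (hrec : ∀ k, 1 ≤ k → h k =
      max (h (k - 1)) (max
        ((3 / ‖v k‖ ^ 2) * (f (x k) - f (x (k - 1))
          - (1 / 2) * inner ℝ (gradient f (x (k - 1)) + gradient f (x k)) (v k)))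
        (Real.sqrt (8 / ((k : ℝ) * S k)) * (‖gradient f (xbar k)‖ - (ℓ / k) * ‖v k‖))))
    (k : ℕ) (hk : 1 ≤ k) :
    h k ≤ H * ((k : ℝ) * S k) ^ (ν / 2) := by
  have hv' : ∀ n, v (n + 1) = v n - (1 / ℓ) • gradient f (x n) := fun n => hv (n + 1) n.succ_pos
  have hx' : ∀ n, x (n + 1) = x n + v (n + 1) := fun n => hx (n + 1) n.succ_pos
  refine le_of_max_recursion (b := fun n => H * ((n : ℝ) * S n) ^ (ν / 2)) hrec ?_
    (fun n hn => max_le ?_ ?_) (fun n _ => ?_) hk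
  · rw [hh0, hS]
    positivity
  · rw [hx n hn, hS]
    exact (three_div_sq_mul_trapezoid_error_le hf hf' hH hν0 hHolder _ _).trans <| by
      gcongr
      exact rpow_le_rpow_half_of_sq_le (norm_nonneg _) (sq_norm_le_mul_sum_sq_norm v hn) hν0
  · rw [hS, hxbar n hn, one_div]
    exact heavyBall_gradient_term_le hf' hH hν0 hν1 hHolder hℓ hv0 hv' hx' hn
  · rw [hS, hS]
    gcongr <;> omega

theorem Hest_upperbound (d : ℕ) (f : EuclideanSpace ℝ (Fin d) → ℝ)
    (hf : ∀ x, DifferentiableAt ℝ f x)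
    (hf' : ∀ x, DifferentiableAt ℝ (gradient f) x)
    (ν : ℝ) (hν0 : 0 ≤ ν) (hν1 : ν ≤ 1)
    (H : ℝ) (hH : 0 ≤ H)
    (hHolder : ∀ x y, ‖fderiv ℝ (gradient f) x - fderiv ℝ (gradient f) y‖ ≤ H * ‖x - y‖ ^ ν)
    (ℓ : ℝ) (hℓ : 0 < ℓ)
    (x v : ℕ → EuclideanSpace ℝ (Fin d))
    (hv0 : v 0 = 0)
    (hv : ∀ k, 1 ≤ k → v k = v (k - 1) - (1 / ℓ) • gradient f (x (k - 1)))
    (hx : ∀ k, 1 ≤ k → x k = x (k - 1) + v k)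
    (hvne : ∀ k, 1 ≤ k → v k ≠ 0)
    (S : ℕ → ℝ) (hS : ∀ k, S k = ∑ i ∈ Icc 1 k, ‖v i‖ ^ 2)
    (xbar : ℕ → EuclideanSpace ℝ (Fin d))
    (hxbar : ∀ k, 1 ≤ k → xbar k = (1 / (k : ℝ)) • ∑ i ∈ range k, x i)
    (h : ℕ → ℝ) (hh0 : h 0 = 0)
    (hrec : ∀ k, 1 ≤ k → h k =
      max (h (k - 1)) (max
        ((3 / ‖v k‖ ^ 2) * (f (x k) - f (x (k - 1))
          - (1 / 2) * inner ℝ (gradient f (x (k - 1)) + gradient f (x k)) (v k)))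
        (Real.sqrt (8 / ((k : ℝ) * S k)) * (‖gradient f (xbar k)‖ - (ℓ / k) * ‖v k‖))))
    (k : ℕ) (hk : 1 ≤ k) :
    h k ≤ H * ((k : ℝ) * S k) ^ (ν / 2) :=
  Hest_upperbound_general d f hf hf' ν hν0 hν1 H hH hHolder ℓ hℓ x v hv0 hv hx S hS xbar hxbar h hh0
    hrec k hk
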